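/- Let m ≥ 1, let (V, E) be a finite reflexive tournament, and let c : ZMod m → V be a Hamilton cycle of the subtournament induced on S = Set.range c. Then the spill set contains S: for every b : ZMod m there exists a homomorphism g from Cyl*_m to (V, E) such that g (i, 0) = c i for every i : ZMod m and g (0, m − 1) = c b. -/
import Mathlib


/-- The edge relation of the gadget `Cyl*_m`, on vertex set `ZMod m × Fin m`:
loops, cycle edges, red edges and green edges. -/
def CylE (m : ℕ) : ZMod m × Fin m → ZMod m × Fin m → Prop := fun a b =>
  a = b ∨
  (b.1 = a.1 + 1 ∧ b.2 = a.2) ∨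
  (a.1 = b.1 ∧ (a.2 : ℕ) + 1 = (b.2 : ℕ)) ∨
  (b.1 = a.1 + 1 ∧ (b.2 : ℕ) + 1 = (a.2 : ℕ))

/-- The spill set of a Hamilton cycle `c` always contains the range of `c`. -/
theorem stmt10 (m : ℕ) (hm : 1 ≤ m)
    {V : Type*} [Fintype V] (E : V → V → Prop)
    (hrefl : ∀ v, E v v)
    (htour : ∀ u v : V, u ≠ v → Xor' (E u v) (E v u))
    (c : ZMod m → V) (hcinj : Function.Injective c)
    (hccyc : ∀ i : ZMod m, E (c i) (c (i + 1))) :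
    ∀ b : ZMod m, ∃ g : ZMod m × Fin m → V,
      (∀ a a', CylE m a a' → E (g a) (g a')) ∧
      (∀ i : ZMod m, g (i, ⟨0, by omega⟩) = c i) ∧
      g (0, ⟨m - 1, by omega⟩) = c b := by
  
  intro b
  haveI : NeZero m := ⟨by omega⟩
  refine ⟨fun p => c (p.1 + ((min (p.2 : ℕ) b.val : ℕ) : ZMod m)), ?_, ?_, ?_⟩
  · rintro ⟨i, j⟩ ⟨i', j'⟩ h
    rcases h with h | ⟨h1, h2⟩ | ⟨h1, h2⟩ | ⟨h1, h2⟩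
    · rw [h]; exact hrefl _
    · simp only at h1 h2
      subst h1; subst h2
      show E (c (i + ((min (j' : ℕ) b.val : ℕ) : ZMod m)))
        (c (i + 1 + ((min (j' : ℕ) b.val : ℕ) : ZMod m)))
      have := hccyc (i + ((min (j' : ℕ) b.val : ℕ) : ZMod m))
      convert this using 2
      ring
    · simp only at h1 h2
      subst h1
      show E (c (i + ((min (j : ℕ) b.val : ℕ) : ZMod m)))
        (c (i + ((min (j' : ℕ) b.val : ℕ) : ZMod m)))
      rcases le_or_gt b.val (j : ℕ) with hle | hlt
      · have e1 : min (j : ℕ) b.val = b.val := min_eq_right hle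
        have e2 : min (j' : ℕ) b.val = b.val := min_eq_right (by omega)
        rw [e1, e2]; exact hrefl _
      · have e1 : min (j : ℕ) b.val = (j : ℕ) := min_eq_left (by omega)
        have e2 : min (j' : ℕ) b.val = (j : ℕ) + 1 := by
          rw [← h2]; exact min_eq_left (by omega)
        rw [e1, e2]
        have := hccyc (i + ((j : ℕ) : ZMod m))
        convert this using 2
        push_cast
        ring
    · simp only at h1 h2
      subst h1
      show E (c (i + ((min (j : ℕ) b.val : ℕ) : ZMod m)))
        (c (i + 1 + ((min (j' : ℕ) b.val : ℕ) : ZMod m)))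
      rcases le_or_gt b.val (j' : ℕ) with hle | hlt
      · have e1 : min (j : ℕ) b.val = b.val := min_eq_right (by omega)
        have e2 : min (j' : ℕ) b.val = b.val := min_eq_right hle
        rw [e1, e2]
        have := hccyc (i + ((b.val : ℕ) : ZMod m))
        convert this using 2
        ring
      · have e1 : min (j : ℕ) b.val = (j' : ℕ) + 1 := by
          rw [← h2]; exact min_eq_left (by omega)
        have e2 : min (j' : ℕ) b.val = (j' : ℕ) := min_eq_left (by omega)
        rw [e1, e2]
        have : i + (((j' : ℕ) + 1 : ℕ) : ZMod m) = i + 1 + ((j' : ℕ) : ZMod m) := by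
          push_cast; ring
        rw [this]
        exact hrefl _
  · intro i
    simp
  · have hb : b.val ≤ m - 1 := by have := b.val_lt; omega
    show c (0 + ((min ((⟨m - 1, by omega⟩ : Fin m) : ℕ) b.val : ℕ) : ZMod m)) = c b
    have : min ((⟨m - 1, by omega⟩ : Fin m) : ℕ) b.val = b.val := min_eq_right hb
    rw [this, zero_add, ZMod.natCast_val, ZMod.cast_id]
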